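/- arXiv:2011.05875 — 4 statements merged into one kernel-verified Lean document; each statement's English description precedes it below -/
import Mathlib

section
/- Let ((Aₙ),(Ψₙ)) be a factorable weak operator-valued frame in B(H,H₀). Then the range of the analysis operator θ_A is a closed subspace of ℓ²(ℕ,H₀). -/
noncomputable section

open ContinuousLinearMap Filter

variable {H H₀ : Type*} [NormedAddCommGroup H] [InnerProductSpace ℂ H] [CompleteSpace H]
  [NormedAddCommGroup H₀] [InnerProductSpace ℂ H₀] [CompleteSpace H₀]

/-- `ℓ²(I, H₀)`: square-summable `H₀`-valued families indexed by `I`. -/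
abbrev l2 (I : Type*) (H₀ : Type*) [NormedAddCommGroup H₀] : Type _ :=
  lp (fun _ : I => H₀) 2

/-- The isometry `Lᵢ : H₀ → ℓ²(I,H₀)` sending `h` to the family equal to `h` at index `i`
and `0` elsewhere. -/
def Lop {I : Type*} [DecidableEq I] (i : I) : H₀ →L[ℂ] l2 I H₀ :=
  LinearMap.mkContinuous
    { toFun := fun h => lp.single 2 i h
      map_add' := by
        intro a b
        apply lp.ext
        funext j
        by_cases hj : j = i
        · subst hj; simp [lp.single_apply_self]
        · simp [lp.single_apply_ne _ _ _ hj, lp.coeFn_add]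
      map_smul' := by
        intro c a
        simp [lp.single_smul] }
    1
    (by
      intro h
      simpa using (lp.norm_single (p := 2) (by norm_num) (fun _ : I => h) i).le)

/-- Convergence of the sequence of partial sums `∑_{n < m} f n` to `x` as `m → ∞`. -/
def SeqSum {E : Type*} [AddCommMonoid E] [TopologicalSpace E] (f : ℕ → E) (x : E) : Prop :=
  Tendsto (fun m => ∑ n ∈ Finset.range m, f n) atTop (nhds x)

/-! Reading off coordinates, `θ_Ψ* θ_A = S`, so `T θ_Ψ*` (with `T S = 1`) is a bounded left
inverse of `θ_A`; a continuous map with a continuous left inverse into a Hausdorff space has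
closed range. -/

open scoped InnerProductSpace

theorem Lop_apply {E I : Type*} [NormedAddCommGroup E] [InnerProductSpace ℂ E] [DecidableEq I]
    (i : I) (h : E) : (Lop i h : l2 I E) = lp.single 2 i h :=
  rfl

theorem SeqSum.apply_of_Lop {E : Type*} [NormedAddCommGroup E] [InnerProductSpace ℂ E]
    {v : ℕ → E} {x : l2 ℕ E} (hx : SeqSum (fun n => Lop n (v n)) x) (k : ℕ) : x k = v k := by
  have hlim : Tendsto (fun m => (∑ n ∈ Finset.range m, Lop n (v n) : l2 ℕ E) k) atTop
      (nhds (x k)) :=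
    ((continuous_apply k).comp lp.uniformContinuous_coe.continuous).continuousAt.tendsto.comp hx
  refine tendsto_nhds_unique_of_eventuallyEq hlim tendsto_const_nhds ?_
  filter_upwards [eventually_gt_atTop k] with m hm
  simp only [lp.coeFn_sum, Finset.sum_apply, Lop_apply, lp.single_apply, Pi.single_apply,
    Finset.sum_ite_eq, Finset.mem_range, hm, if_true]

theorem adjoint_apply_of_seqSum {A Ψ : ℕ → H →L[ℂ] H₀} {S : H →L[ℂ] H}
    (hS : ∀ h : H, SeqSum (fun n => adjoint (Ψ n) (A n h)) (S h))
    {θA θΨ : H →L[ℂ] l2 ℕ H₀}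
    (hθA : ∀ h : H, SeqSum (fun n => Lop n (A n h)) (θA h))
    (hθΨ : ∀ h : H, SeqSum (fun n => Lop n (Ψ n h)) (θΨ h)) (h : H) :
    adjoint θΨ (θA h) = S h := by
  refine ext_inner_right ℂ fun g => ?_
  rw [adjoint_inner_left]
  have hpartial : ∀ m, ⟪∑ n ∈ Finset.range m, adjoint (Ψ n) (A n h), g⟫_ℂ
      = ∑ n ∈ Finset.range m, ⟪(θA h : l2 ℕ H₀) n, (θΨ g : l2 ℕ H₀) n⟫_ℂ := fun m => by
    simp only [sum_inner, adjoint_inner_left, (hθA h).apply_of_Lop, (hθΨ g).apply_of_Lop]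
  exact tendsto_nhds_unique (lp.hasSum_inner (θA h) (θΨ g)).tendsto_sum_nat
    ((((continuous_id.inner continuous_const).tendsto _).comp (hS h)).congr hpartial)

theorem stmt4_general
    (A Ψ : ℕ → H →L[ℂ] H₀) (S T : H →L[ℂ] H)
    (hS : ∀ h : H, SeqSum (fun n => adjoint (Ψ n) (A n h)) (S h))
    (hTS : T ∘L S = 1)
    (θA θΨ : H →L[ℂ] l2 ℕ H₀)
    (hθA : ∀ h : H, SeqSum (fun n => Lop n (A n h)) (θA h))
    (hθΨ : ∀ h : H, SeqSum (fun n => Lop n (Ψ n h)) (θΨ h)) :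
    IsClosed (Set.range θA) := by
  have hleft : Function.LeftInverse (T ∘L adjoint θΨ) θA := fun h => by
    rw [comp_apply, adjoint_apply_of_seqSum hS hθA hθΨ, ← comp_apply, hTS, one_apply_eq_self]
  exact hleft.isClosed_range (T ∘L adjoint θΨ).continuous θA.continuous

/-- The range of the analysis operator of a factorable weak OVF is closed. -/
theorem stmt4
    (A Ψ : ℕ → H →L[ℂ] H₀) (S T : H →L[ℂ] H)
    (hS : ∀ h : H, SeqSum (fun n => adjoint (Ψ n) (A n h)) (S h))
    (hST : S ∘L T = 1) (hTS : T ∘L S = 1)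
    (θA θΨ : H →L[ℂ] l2 ℕ H₀)
    (hθA : ∀ h : H, SeqSum (fun n => Lop n (A n h)) (θA h))
    (hθΨ : ∀ h : H, SeqSum (fun n => Lop n (Ψ n h)) (θΨ h)) :
    IsClosed (Set.range θA) :=
  stmt4_general A Ψ S T hS hTS θA θΨ hθA hθΨ
end
end

section
/- A pair of sequences ((Aₙ),(Ψₙ)) of bounded linear operators from H to H₀ is a Riesz factorable weak operator-valued frame in B(H,H₀) if and only if there exist bounded linear operators U, V : H → ℓ²(ℕ,H₀) such that Aₙ = Lₙ* U and Ψₙ = Lₙ* V for all n ∈ ℕ, V*U is bounded invertible on H, and U (V*U)⁻¹ V* = I on ℓ²(ℕ,H₀). -/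
noncomputable section

open ContinuousLinearMap Filter

variable {H H₀ : Type*} [NormedAddCommGroup H] [InnerProductSpace ℂ H] [CompleteSpace H]
  [NormedAddCommGroup H₀] [InnerProductSpace ℂ H₀] [CompleteSpace H₀]

lemma adjoint_Lop_apply (n : ℕ) (x : l2 ℕ H₀) :
    adjoint (Lop (H₀ := H₀) n) x = x n := by
  apply ext_inner_left ℂ
  intro v
  rw [ContinuousLinearMap.adjoint_inner_right]
  exact lp.inner_single_left (𝕜 := ℂ) (G := fun _ : ℕ => H₀) n v x

/-- A coordinate-extraction lemma: if the partial sums of `Lₙ (Bₙ h)` converge to `θ h`,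
then `Bₙ = Lₙ* θ`. -/
lemma coord_of_seqsum {B : ℕ → H →L[ℂ] H₀} {θ : H →L[ℂ] l2 ℕ H₀}
    (hB : ∀ h : H, SeqSum (fun n => Lop n (B n h)) (θ h)) (n : ℕ) :
    B n = adjoint (Lop n) ∘L θ := by
  ext x
  have h1 : Tendsto (fun m => adjoint (Lop (H₀ := H₀) n)
      (∑ k ∈ Finset.range m, Lop k (B k x))) atTop (nhds (adjoint (Lop n) (θ x))) :=
    ((adjoint (Lop (H₀ := H₀) n)).continuous.tendsto _).comp (hB x)
  have h2 : ∀ m, n < m → adjoint (Lop (H₀ := H₀) n)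
      (∑ k ∈ Finset.range m, Lop k (B k x)) = B n x := by
    intro m hm
    rw [map_sum]
    have : ∀ k, adjoint (Lop (H₀ := H₀) n) (Lop k (B k x))
        = if n = k then B k x else 0 := by
      intro k
      rw [adjoint_Lop_apply]
      have hL : (Lop k (B k x) : l2 ℕ H₀) = lp.single 2 k (B k x) := rfl
      rw [hL]
      by_cases hk : n = k
      · subst hk; simp [lp.single_apply_self]
      · simp [lp.single_apply_ne _ _ _ hk, hk]
    simp only [this]
    rw [Finset.sum_ite_eq (Finset.range m) n (fun k => B k x)]
    simp [Finset.mem_range.mpr hm]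
  have h3 : Tendsto (fun m => adjoint (Lop (H₀ := H₀) n)
      (∑ k ∈ Finset.range m, Lop k (B k x))) atTop (nhds (B n x)) := by
    apply Tendsto.congr' _ tendsto_const_nhds
    filter_upwards [eventually_gt_atTop n] with m hm
    exact (h2 m hm).symm
  simpa using (tendsto_nhds_unique h3 h1)

/-- `((Aₙ),(Ψₙ))` is a Riesz factorable weak OVF iff `Aₙ = Lₙ* U`, `Ψₙ = Lₙ* V`
with `V*U` bounded invertible and `U (V*U)⁻¹ V* = I`. -/
theorem stmt7 (A Ψ : ℕ → H →L[ℂ] H₀) :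
    (∃ (θA θΨ : H →L[ℂ] l2 ℕ H₀) (S T : H →L[ℂ] H),
        (∀ h : H, SeqSum (fun n => Lop n (A n h)) (θA h)) ∧
        (∀ h : H, SeqSum (fun n => Lop n (Ψ n h)) (θΨ h)) ∧
        (∀ h : H, SeqSum (fun n => adjoint (Ψ n) (A n h)) (S h)) ∧
        S ∘L T = 1 ∧ T ∘L S = 1 ∧
        θA ∘L T ∘L adjoint θΨ = 1) ↔
    (∃ (U V : H →L[ℂ] l2 ℕ H₀) (W : H →L[ℂ] H),
        (∀ n : ℕ, A n = adjoint (Lop n) ∘L U) ∧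
        (∀ n : ℕ, Ψ n = adjoint (Lop n) ∘L V) ∧
        (adjoint V ∘L U) ∘L W = 1 ∧ W ∘L (adjoint V ∘L U) = 1 ∧
        (U ∘L W) ∘L adjoint V = 1) := by
  constructor
  · rintro ⟨θA, θΨ, S, T, hA, hΨ, hS, hST, hTS, hP⟩
    have hAn : ∀ n, A n = adjoint (Lop n) ∘L θA := coord_of_seqsum hA
    have hΨn : ∀ n, Ψ n = adjoint (Lop n) ∘L θΨ := coord_of_seqsum hΨ
    -- S = θΨ* ∘ θA
    have hSeq : adjoint θΨ ∘L θA = S := by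
      ext x
      have h1 : Tendsto (fun m => adjoint θΨ
          (∑ k ∈ Finset.range m, Lop k (A k x))) atTop (nhds (adjoint θΨ (θA x))) :=
        ((adjoint θΨ).continuous.tendsto _).comp (hA x)
      have h2 : ∀ m, adjoint θΨ (∑ k ∈ Finset.range m, Lop k (A k x))
          = ∑ k ∈ Finset.range m, adjoint (Ψ k) (A k x) := by
        intro m
        rw [map_sum]
        refine Finset.sum_congr rfl fun k _ => ?_
        rw [hΨn k, adjoint_comp, adjoint_adjoint]
        rfl
      have h3 : Tendsto (fun m => ∑ k ∈ Finset.range m, adjoint (Ψ k) (A k x))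
          atTop (nhds (adjoint θΨ (θA x))) := by
        refine h1.congr fun m => h2 m
      exact tendsto_nhds_unique h3 (hS x)
    refine ⟨θA, θΨ, T, hAn, hΨn, ?_, ?_, ?_⟩
    · rw [hSeq]; exact hST
    · rw [hSeq]; exact hTS
    · rw [comp_assoc]; exact hP
  · rintro ⟨U, V, W, hAn, hΨn, h1, h2, h3⟩
    have keyA : ∀ (θ : H →L[ℂ] l2 ℕ H₀) (B : ℕ → H →L[ℂ] H₀),
        (∀ n, B n = adjoint (Lop n) ∘L θ) →
        ∀ h : H, SeqSum (fun n => Lop n (B n h)) (θ h) := by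
      intro θ B hB h
      have hsum : HasSum (fun n => lp.single 2 n ((θ h) n)) (θ h) :=
        lp.hasSum_single (by norm_num) (θ h)
      have := hsum.tendsto_sum_nat
      refine this.congr fun m => ?_
      refine Finset.sum_congr rfl fun k _ => ?_
      show lp.single 2 k ((θ h) k) = Lop k (B k h)
      rw [hB k, comp_apply, adjoint_Lop_apply]
      rfl
    refine ⟨U, V, adjoint V ∘L U, W, keyA U A hAn, keyA V Ψ hΨn, ?_, h1, h2, ?_⟩
    · intro h
      have hsum := (keyA U A hAn) h
      have h1' : Tendsto (fun m => adjoint V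
          (∑ k ∈ Finset.range m, Lop k (A k h))) atTop
          (nhds (adjoint V (U h))) :=
        ((adjoint V).continuous.tendsto _).comp hsum
      refine h1'.congr fun m => ?_
      rw [map_sum]
      refine Finset.sum_congr rfl fun k _ => ?_
      show adjoint V (Lop k (A k h)) = adjoint (Ψ k) (A k h)
      rw [hΨn k, adjoint_comp, adjoint_adjoint]
      rfl
    · rw [comp_assoc] at h3; exact h3
end
end

section
/- Let ((Aₙ),(Ψₙ)) and ((Bₙ),(Φₙ)) be weak operator-valued frames in B(H,H₀) which are orthogonal to each other. Then ((Aₙ ⊕ Bₙ), (Ψₙ ⊕ Φₙ)), where (Aₙ ⊕ Bₙ)(h ⊕ g) := Aₙ h + Bₙ g for h ⊕ g ∈ H ⊕ H, is a weak OVF in B(H ⊕ H, H₀) whose frame operator is S_{A,Ψ} ⊕ S_{B,Φ}. Moreover, if both ((Aₙ),(Ψₙ)) and ((Bₙ),(Φₙ)) are Parseval, then ((Aₙ ⊕ Bₙ), (Ψₙ ⊕ Φₙ)) is Parseval. -/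
noncomputable section

open ContinuousLinearMap Filter

variable {H H₀ : Type*} [NormedAddCommGroup H] [InnerProductSpace ℂ H] [CompleteSpace H]
  [NormedAddCommGroup H₀] [InnerProductSpace ℂ H₀] [CompleteSpace H₀]

/-- The direct sum `A ⊕ B : H ⊕ H → H₀`, `(h, g) ↦ A h + B g`. -/
def dsumOp (A B : H →L[ℂ] H₀) : WithLp 2 (H × H) →L[ℂ] H₀ :=
  (A ∘L fst ℂ H H + B ∘L snd ℂ H H) ∘L
    ((WithLp.prodContinuousLinearEquiv 2 ℂ H H : WithLp 2 (H × H) ≃L[ℂ] H × H) :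
      WithLp 2 (H × H) →L[ℂ] H × H)

/-- The direct sum `S ⊕ S'` of two operators on `H`, as an operator on `H ⊕ H`. -/
def dsumEnd (S S' : H →L[ℂ] H) : WithLp 2 (H × H) →L[ℂ] WithLp 2 (H × H) :=
  (((WithLp.prodContinuousLinearEquiv 2 ℂ H H).symm : (H × H) ≃L[ℂ] WithLp 2 (H × H)) :
      H × H →L[ℂ] WithLp 2 (H × H)) ∘L
    (S.prodMap S') ∘L
      ((WithLp.prodContinuousLinearEquiv 2 ℂ H H : WithLp 2 (H × H) ≃L[ℂ] H × H) :
        WithLp 2 (H × H) →L[ℂ] H × H)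


/-! The adjoint of `Ψₙ ⊕ Φₙ` is `y ↦ (Ψₙ* y, Φₙ* y)`, so the `n`-th term of the frame series at
`(h, g)` is `(Ψₙ* Aₙ h + Ψₙ* Bₙ g, Φₙ* Aₙ h + Φₙ* Bₙ g)`. Orthogonality makes the cross series sum
to `0`, so the series converges componentwise to `(S h, S' g)`. Invertibility of `S ⊕ S'` holds
because `(S, S') ↦ S ⊕ S'` is multiplicative. -/

namespace SeqSum

variable {E F : Type*}

theorem add [AddCommMonoid E] [TopologicalSpace E] [ContinuousAdd E] {f g : ℕ → E} {a b : E}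
    (hf : SeqSum f a) (hg : SeqSum g b) : SeqSum (fun n => f n + g n) (a + b) := by
  unfold SeqSum
  simpa only [Finset.sum_add_distrib] using Tendsto.add hf hg

theorem prodMk [AddCommMonoid E] [TopologicalSpace E] [AddCommMonoid F] [TopologicalSpace F]
    {f : ℕ → E} {g : ℕ → F} {a : E} {b : F} (hf : SeqSum f a) (hg : SeqSum g b) :
    SeqSum (fun n => (f n, g n)) (a, b) := by
  unfold SeqSum
  simpa only [prod_mk_sum] using Tendsto.prodMk_nhds hf hg

theorem map [AddCommMonoid E] [TopologicalSpace E] [AddCommMonoid F] [TopologicalSpace F]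
    {G : Type*} [FunLike G E F] [AddMonoidHomClass G E F] (L : G) (hL : Continuous L)
    {f : ℕ → E} {a : E} (hf : SeqSum f a) : SeqSum (fun n => L (f n)) (L a) := by
  unfold SeqSum
  simpa only [Function.comp_def, map_sum] using (hL.tendsto a).comp hf

end SeqSum

section

omit [CompleteSpace H] [CompleteSpace H₀]

theorem dsumOp_apply (P Q : H →L[ℂ] H₀) (x : WithLp 2 (H × H)) :
    dsumOp P Q x = P x.fst + Q x.snd := rfl

theorem dsumEnd_apply (S S' : H →L[ℂ] H) (x : WithLp 2 (H × H)) :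
    dsumEnd S S' x = WithLp.toLp 2 (S x.fst, S' x.snd) := rfl

def dsumEndHom : (H →L[ℂ] H) × (H →L[ℂ] H) →* (WithLp 2 (H × H) →L[ℂ] WithLp 2 (H × H)) where
  toFun p := dsumEnd p.1 p.2
  map_one' := by ext; rfl
  map_mul' _ _ := by ext; rfl

theorem dsumEnd_one : dsumEnd (1 : H →L[ℂ] H) 1 = 1 :=
  map_one (dsumEndHom (H := H))

theorem IsUnit.dsumEnd {S S' : H →L[ℂ] H} (hS : IsUnit S) (hS' : IsUnit S') :
    IsUnit (dsumEnd S S') :=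
  (Prod.isUnit_iff (x := (S, S')).mpr ⟨hS, hS'⟩).map dsumEndHom

end

theorem adjoint_dsumOp_apply (P Q : H →L[ℂ] H₀) (y : H₀) :
    adjoint (dsumOp P Q) y = WithLp.toLp 2 (adjoint P y, adjoint Q y) := by
  refine ext_inner_right ℂ fun x => ?_
  rw [adjoint_inner_left, dsumOp_apply, inner_add_right, ← adjoint_inner_left P,
    ← adjoint_inner_left Q]
  rfl

theorem seqSum_adjoint_dsumOp_dsumOp {A Ψ B Φ : ℕ → H →L[ℂ] H₀} {S S' : H →L[ℂ] H}
    (hA : ∀ h : H, SeqSum (fun n => adjoint (Ψ n) (A n h)) (S h))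
    (hB : ∀ h : H, SeqSum (fun n => adjoint (Φ n) (B n h)) (S' h))
    (hΨB : ∀ h : H, SeqSum (fun n => adjoint (Ψ n) (B n h)) 0)
    (hΦA : ∀ h : H, SeqSum (fun n => adjoint (Φ n) (A n h)) 0) (x : WithLp 2 (H × H)) :
    SeqSum (fun n => adjoint (dsumOp (Ψ n) (Φ n)) (dsumOp (A n) (B n) x)) (dsumEnd S S' x) := by
  have hfst : SeqSum (fun n => adjoint (Ψ n) (A n x.fst + B n x.snd)) (S x.fst) := by
    simpa only [map_add, add_zero] using (hA x.fst).add (hΨB x.snd)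
  have hsnd : SeqSum (fun n => adjoint (Φ n) (A n x.fst + B n x.snd)) (S' x.snd) := by
    simpa only [map_add, zero_add] using (hΦA x.fst).add (hB x.snd)
  simpa only [dsumEnd_apply, adjoint_dsumOp_apply, dsumOp_apply,
      WithLp.prodContinuousLinearEquiv_symm_apply]
    using (hfst.prodMk hsnd).map (WithLp.prodContinuousLinearEquiv 2 ℂ H H).symm
      (ContinuousLinearEquiv.continuous _)

/-- The direct sum of two mutually orthogonal weak OVFs is a weak OVF on
`H ⊕ H` with frame operator `S_{A,Ψ} ⊕ S_{B,Φ}`; it is Parseval whenever both are. -/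
theorem stmt13
    (A Ψ B Φ : ℕ → H →L[ℂ] H₀) (S S' : H →L[ℂ] H)
    (hA : ∀ h : H, SeqSum (fun n => adjoint (Ψ n) (A n h)) (S h)) (hSu : IsUnit S)
    (hB : ∀ h : H, SeqSum (fun n => adjoint (Φ n) (B n h)) (S' h)) (hS'u : IsUnit S')
    (hortho1 : ∀ h : H, SeqSum (fun n => adjoint (Ψ n) (B n h)) 0)
    (hortho2 : ∀ h : H, SeqSum (fun n => adjoint (Φ n) (A n h)) 0) :
    (∀ x : WithLp 2 (H × H),
      SeqSum (fun n => adjoint (dsumOp (Ψ n) (Φ n)) (dsumOp (A n) (B n) x))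
        (dsumEnd S S' x)) ∧
    IsUnit (dsumEnd S S') ∧
    ((S = 1 ∧ S' = 1) →
      ∀ x : WithLp 2 (H × H),
        SeqSum (fun n => adjoint (dsumOp (Ψ n) (Φ n)) (dsumOp (A n) (B n) x)) x) := by
  have frame := seqSum_adjoint_dsumOp_dsumOp hA hB hortho1 hortho2
  refine ⟨frame, hSu.dsumEnd hS'u, ?_⟩
  rintro ⟨rfl, rfl⟩ x
  have := frame x
  rwa [dsumEnd_one] at this
end
end

section
/- Let ((Aₙ),(Ψₙ)) be a factorable weak operator-valued frame in B(H,H₀) with frame operator S := S_{A,Ψ}. Suppose (Bₙ) is a sequence of bounded operators from H to H₀ for which there exist α, β, γ ≥ 0 with max{α + γ‖θ_Ψ (S*)⁻¹‖, β} < 1 such that for every m ∈ ℕ and every y ∈ ℓ²(ℕ,H₀): ‖Σ_{n=1}^m (Aₙ* − Bₙ*) Lₙ* y‖ ≤ α ‖Σ_{n=1}^m Aₙ* Lₙ* y‖ + β ‖Σ_{n=1}^m Bₙ* Lₙ* y‖ + γ (Σ_{n=1}^m ‖Lₙ* y‖²)^{1/2}. Then ((Bₙ),(Ψₙ)) is a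 factorable weak OVF in B(H,H₀) with frame bounds (1 − (α + γ‖θ_Ψ (S*)⁻¹‖)) / ((1+β)‖(S*)⁻¹‖) and ‖θ_Ψ‖((1+α)‖θ_A‖ + γ) / (1 − β). -/
noncomputable section

open ContinuousLinearMap Filter

variable {H H₀ : Type*} [NormedAddCommGroup H] [InnerProductSpace ℂ H] [CompleteSpace H]
  [NormedAddCommGroup H₀] [InnerProductSpace ℂ H₀] [CompleteSpace H₀]

/-! Since `S = θΨ* θA`, the operator `V = θΨ (S*)⁻¹` is a right inverse of `θA*`. The
perturbation inequality bounds the partial synthesis sums of `(Bₙ)` uniformly, which yields the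
analysis operator `θB`, and in the limit it shows that `R = θB* V` satisfies
`‖x - R x‖ ≤ (α + γ‖V‖)‖x‖ + β‖R x‖`. By the Casazza–Christensen theorem `R` is invertible with
`‖R⁻¹‖ ≤ (1 + β) / (1 - (α + γ‖V‖))`, and the new frame operator is `θΨ* θB = S R*`. -/

section LopLemmas

variable {I F : Type*} [NormedAddCommGroup F]

theorem sqrt_sum_norm_sq_le (y : l2 I F) (s : Finset I) : √(∑ i ∈ s, ‖y i‖ ^ 2) ≤ ‖y‖ := by
  have h := lp.sum_rpow_le_norm_rpow (E := fun _ : I => F) (p := 2) (by norm_num) y s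
  simp only [ENNReal.toReal_ofNat, Real.rpow_two] at h
  exact (Real.sqrt_le_sqrt h).trans_eq (Real.sqrt_sq (norm_nonneg _))

variable [InnerProductSpace ℂ F] [DecidableEq I]

theorem Lop_apply_s18 (i : I) (x : F) : Lop i x = lp.single 2 i x := rfl

theorem adjoint_Lop_apply_s18 [CompleteSpace F] (i : I) (y : l2 I F) : adjoint (Lop i) y = y i :=
  ext_inner_right ℂ fun x => by rw [adjoint_inner_left, Lop_apply_s18, lp.inner_single_right]

theorem norm_sum_Lop (f : I → F) (s : Finset I) :
    ‖∑ i ∈ s, Lop i (f i)‖ = √(∑ i ∈ s, ‖f i‖ ^ 2) := by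
  have h := lp.norm_sum_single (E := fun _ : I => F) (p := 2) (by norm_num) f s
  simp only [ENNReal.toReal_ofNat, Real.rpow_two] at h
  rw [← h, Real.sqrt_sq (norm_nonneg _)]
  rfl

theorem norm_sum_Lop_apply_le (y : l2 I F) (s : Finset I) : ‖∑ i ∈ s, Lop i (y i)‖ ≤ ‖y‖ :=
  (norm_sum_Lop _ s).trans_le (sqrt_sum_norm_sq_le y s)

theorem sum_range_Lop_apply_of_lt (f : ℕ → F) {m n : ℕ} (hnm : n < m) :
    (∑ k ∈ Finset.range m, Lop k (f k)) n = f n := by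
  rw [lp.coeFn_sum, Finset.sum_apply]
  simp [Lop_apply_s18, lp.single_apply, Finset.sum_pi_single, hnm]

end LopLemmas

section AnalysisOperator

variable {E F : Type*} [NormedAddCommGroup E] [NormedSpace ℂ E]
  [NormedAddCommGroup F] [InnerProductSpace ℂ F]

def IsAnalysisOperator (X : ℕ → E →L[ℂ] F) (θ : E →L[ℂ] l2 ℕ F) : Prop :=
  ∀ h, SeqSum (fun n => Lop n (X n h)) (θ h)

theorem IsAnalysisOperator.apply_apply [CompleteSpace F] {X : ℕ → E →L[ℂ] F}
    {θ : E →L[ℂ] l2 ℕ F} (hθ : IsAnalysisOperator X θ) (h : E) (n : ℕ) :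
    θ h n = X n h := by
  have hlim := ((adjoint (Lop n)).continuous.tendsto _).comp (hθ h)
  rw [adjoint_Lop_apply_s18] at hlim
  refine tendsto_nhds_unique hlim (tendsto_const_nhds.congr' ?_)
  filter_upwards [eventually_gt_atTop n] with m hm
  rw [Function.comp_apply, adjoint_Lop_apply_s18, sum_range_Lop_apply_of_lt _ hm]

end AnalysisOperator

section AnalysisOperatorAdjoint

variable {E F : Type*} [NormedAddCommGroup E] [InnerProductSpace ℂ E] [CompleteSpace E]
  [NormedAddCommGroup F] [InnerProductSpace ℂ F] [CompleteSpace F]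

namespace IsAnalysisOperator

variable {X : ℕ → E →L[ℂ] F} {θ : E →L[ℂ] l2 ℕ F}

theorem adjoint_comp_Lop (hθ : IsAnalysisOperator X θ) (n : ℕ) :
    adjoint θ ∘L Lop n = adjoint (X n) := by
  ext x
  refine ext_inner_right ℂ fun h => ?_
  rw [comp_apply, adjoint_inner_left, adjoint_inner_left, Lop_apply_s18, lp.inner_single_left,
    hθ.apply_apply]

theorem hasSum_adjoint_apply (hθ : IsAnalysisOperator X θ) (y : l2 ℕ F) :
    HasSum (fun n => adjoint (X n) (y n)) (adjoint θ y) := by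
  convert (lp.hasSum_single ENNReal.ofNat_ne_top y).mapL (adjoint θ) using 1
  funext n
  rw [← hθ.adjoint_comp_Lop]
  rfl

theorem norm_sum_adjoint_apply_le (hθ : IsAnalysisOperator X θ) (y : l2 ℕ F) (s : Finset ℕ) :
    ‖∑ n ∈ s, adjoint (X n) (y n)‖ ≤ ‖θ‖ * ‖y‖ :=
  calc ‖∑ n ∈ s, adjoint (X n) (y n)‖ = ‖adjoint θ (∑ n ∈ s, Lop n (y n))‖ := by
        simp only [map_sum, ← comp_apply, hθ.adjoint_comp_Lop]
    _ ≤ ‖adjoint θ‖ * ‖∑ n ∈ s, Lop n (y n)‖ := le_opNorm _ _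
    _ ≤ ‖θ‖ * ‖y‖ := by rw [adjoint.norm_map]; gcongr; exact norm_sum_Lop_apply_le y s

theorem seqSum_adjoint_apply {Ψ : ℕ → E →L[ℂ] F} {θΨ : E →L[ℂ] l2 ℕ F}
    (hθΨ : IsAnalysisOperator Ψ θΨ) (hθ : IsAnalysisOperator X θ) (h : E) :
    SeqSum (fun n => adjoint (Ψ n) (X n h)) ((adjoint θΨ ∘L θ) h) := by
  have hlim := (hθΨ.hasSum_adjoint_apply (θ h)).tendsto_sum_nat
  simp only [hθ.apply_apply] at hlim
  exact hlim

end IsAnalysisOperator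

theorem norm_sum_Lop_apply_le_of_norm_sum_adjoint_le {X : ℕ → E →L[ℂ] F} {C : ℝ} (hC : 0 ≤ C)
    (hX : ∀ m (y : l2 ℕ F), ‖∑ n ∈ Finset.range m, adjoint (X n) (y n)‖ ≤ C * ‖y‖)
    (m : ℕ) (h : E) : ‖∑ n ∈ Finset.range m, Lop n (X n h)‖ ≤ C * ‖h‖ := by
  let D : l2 ℕ F →L[ℂ] E := ∑ n ∈ Finset.range m, adjoint (X n) ∘L adjoint (Lop n)
  have hD : ‖D‖ ≤ C := opNorm_le_bound _ hC fun y => by simpa [D, adjoint_Lop_apply_s18] using hX m y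
  have hDh : adjoint D h = ∑ n ∈ Finset.range m, Lop n (X n h) := by
    simp [D, map_sum, adjoint_comp]
  calc ‖∑ n ∈ Finset.range m, Lop n (X n h)‖ = ‖adjoint D h‖ := by rw [hDh]
    _ ≤ ‖adjoint D‖ * ‖h‖ := le_opNorm _ _
    _ ≤ C * ‖h‖ := by rw [adjoint.norm_map]; gcongr

theorem exists_isAnalysisOperator {X : ℕ → E →L[ℂ] F} {C : ℝ} (hC : 0 ≤ C)
    (hX : ∀ m (y : l2 ℕ F), ‖∑ n ∈ Finset.range m, adjoint (X n) (y n)‖ ≤ C * ‖y‖) :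
    ∃ θ : E →L[ℂ] l2 ℕ F, IsAnalysisOperator X θ ∧ ∀ h, ‖θ h‖ ≤ C * ‖h‖ := by
  have hpartial := norm_sum_Lop_apply_le_of_norm_sum_adjoint_le hC hX
  have hmem (h : E) : Memℓp (fun n => X n h) 2 := by
    refine memℓp_gen (summable_of_sum_range_le (c := (C * ‖h‖) ^ 2) (fun _ => by positivity)
      fun m => ?_)
    have := hpartial m h
    rw [norm_sum_Lop, Real.sqrt_le_left (by positivity)] at this
    simpa [Real.rpow_two] using this
  let θ : E →ₗ[ℂ] l2 ℕ F :=
    { toFun := fun h => ⟨fun n => X n h, hmem h⟩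
      map_add' := fun a b => lp.ext <| funext fun n => map_add (X n) a b
      map_smul' := fun c a => lp.ext <| funext fun n => map_smul (X n) c a }
  have hlim (h : E) : SeqSum (fun n => Lop n (X n h)) (θ h) :=
    (lp.hasSum_single ENNReal.ofNat_ne_top (θ h)).tendsto_sum_nat
  have hle (h : E) : ‖θ h‖ ≤ C * ‖h‖ := le_of_tendsto' (hlim h).norm (hpartial · h)
  exact ⟨θ.mkContinuous C hle, hlim, hle⟩

end AnalysisOperatorAdjoint

theorem div_mul_norm_le_norm_of_norm_sub_le {E : Type*} [SeminormedAddCommGroup E] {x y : E}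
    {l₁ l₂ : ℝ} (hl₂ : 0 ≤ l₂) (hxy : ‖x - y‖ ≤ l₁ * ‖x‖ + l₂ * ‖y‖) :
    (1 - l₁) / (1 + l₂) * ‖x‖ ≤ ‖y‖ := by
  rw [div_mul_eq_mul_div, div_le_iff₀ (by linarith)]
  linarith [norm_le_norm_add_norm_sub' x y]

section MethodOfContinuity

variable {𝕜 E : Type*} [NontriviallyNormedField 𝕜] [NormedAddCommGroup E] [NormedSpace 𝕜 E]

theorem norm_inv_le_of_mul_norm_le (u : (E →L[𝕜] E)ˣ) {m : ℝ} (hm : 0 < m)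
    (hu : ∀ x, m * ‖x‖ ≤ ‖(u : E →L[𝕜] E) x‖) : ‖(↑u⁻¹ : E →L[𝕜] E)‖ ≤ m⁻¹ :=
  opNorm_le_bound _ (inv_nonneg.2 hm.le) fun y => by
    have hy : (u : E →L[𝕜] E) ((↑u⁻¹ : E →L[𝕜] E) y) = y := DFunLike.congr_fun u.mul_inv y
    rw [inv_mul_eq_div, le_div_iff₀' hm]
    simpa only [hy] using hu ((↑u⁻¹ : E →L[𝕜] E) y)

theorem isUnit_of_norm_succ_sub_lt [CompleteSpace E] {P : ℕ → E →L[𝕜] E} {m : ℝ} (hm : 0 < m)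
    {N : ℕ} (h₀ : IsUnit (P 0)) (hbelow : ∀ k ≤ N, ∀ x, m * ‖x‖ ≤ ‖P k x‖)
    (hstep : ∀ k < N, ‖P (k + 1) - P k‖ < m) : IsUnit (P N) := by
  nontriviality E →L[𝕜] E
  suffices ∀ k ≤ N, IsUnit (P k) from this N le_rfl
  intro k
  induction k with
  | zero => exact fun _ => h₀
  | succ k ih =>
    intro hk
    obtain ⟨u, hu⟩ := ih (by omega)
    have hinv := norm_inv_le_of_mul_norm_le u hm (hu ▸ hbelow k (by omega))
    have hnear : ‖P (k + 1) - u‖ < ‖(↑u⁻¹ : E →L[𝕜] E)‖⁻¹ :=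
      (hu ▸ hstep k hk).trans_le ((le_inv_comm₀ hm (Units.norm_pos u⁻¹)).2 hinv)
    exact (u.ofNearby _ hnear).isUnit

end MethodOfContinuity

section CasazzaChristensen

variable {𝕜 E : Type*} [RCLike 𝕜] [NormedAddCommGroup E] [NormedSpace 𝕜 E]

theorem mul_norm_add_norm_le_norm_add_smul_sub {x y : E} {l₁ l₂ : ℝ}
    (hxy : ‖x - y‖ ≤ l₁ * ‖x‖ + l₂ * ‖y‖) {t : ℝ} (ht₀ : 0 ≤ t) (ht₁ : t ≤ 1) :
    (1 - max l₁ l₂) * (‖x‖ + ‖y‖) ≤ 2 * ‖x + (t : 𝕜) • (y - x)‖ := by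
  set z := x + (t : 𝕜) • (y - x)
  have hd : ‖x - y‖ ≤ max l₁ l₂ * (‖x‖ + ‖y‖) := hxy.trans <| by
    nlinarith [le_max_left l₁ l₂, le_max_right l₁ l₂, norm_nonneg x, norm_nonneg y]
  have hx : ‖x‖ ≤ ‖z‖ + t * ‖x - y‖ := by
    calc ‖x‖ = ‖z - (t : 𝕜) • (y - x)‖ := by rw [add_sub_cancel_right]
      _ ≤ ‖z‖ + ‖(t : 𝕜) • (y - x)‖ := norm_sub_le _ _
      _ = ‖z‖ + t * ‖x - y‖ := by rw [norm_smul, RCLike.norm_of_nonneg ht₀, norm_sub_rev]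
  have hy : ‖y‖ ≤ ‖z‖ + (1 - t) * ‖x - y‖ := by
    calc ‖y‖ = ‖z + ((1 - t : ℝ) : 𝕜) • (y - x)‖ := by
          congr 1; simp only [z, RCLike.ofReal_sub, RCLike.ofReal_one, sub_smul, one_smul]; abel
      _ ≤ ‖z‖ + ‖((1 - t : ℝ) : 𝕜) • (y - x)‖ := norm_add_le _ _
      _ = ‖z‖ + (1 - t) * ‖x - y‖ := by
        rw [norm_smul, RCLike.norm_of_nonneg (sub_nonneg.2 ht₁), norm_sub_rev]
  linarith

/-- The Casazza–Christensen perturbation theorem. It is proved by the method of continuity along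
the segment from `1` to `R`, every point of which is bounded below by `(1 - max l₁ l₂) / 2`. -/
theorem isUnit_of_norm_sub_apply_le [CompleteSpace E] {R : E →L[𝕜] E} {l₁ l₂ : ℝ}
    (h₁ : l₁ < 1) (h₂ : l₂ < 1) (hR : ∀ x, ‖x - R x‖ ≤ l₁ * ‖x‖ + l₂ * ‖R x‖) : IsUnit R := by
  set m := (1 - max l₁ l₂) / 2
  have hm : 0 < m := by have := max_lt h₁ h₂; simp only [m]; linarith
  obtain ⟨N, hN⟩ := exists_nat_gt (‖R - 1‖ / m)
  have hN₀ : (0 : ℝ) < N := (div_nonneg (norm_nonneg _) hm.le).trans_lt hN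
  let P : ℕ → E →L[𝕜] E := fun k => 1 + ((k / N : ℝ) : 𝕜) • (R - 1)
  have hPN : P N = R := by
    simp only [P, div_self hN₀.ne', RCLike.ofReal_one, one_smul, add_sub_cancel]
  rw [← hPN]
  refine isUnit_of_norm_succ_sub_lt hm (by simp [P]) (fun k hk x => ?_) (fun k _ => ?_)
  · have hPk : P k x = x + ((k / N : ℝ) : 𝕜) • (R x - x) := by simp [P]
    have := mul_norm_add_norm_le_norm_add_smul_sub (𝕜 := 𝕜) (hR x) (t := k / N) (by positivity)
      ((div_le_one hN₀).2 (by exact_mod_cast hk))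
    rw [← hPk] at this
    simp only [m]
    nlinarith [norm_nonneg (R x), le_of_lt (sub_pos.2 (max_lt h₁ h₂))]
  · have hstep : P (k + 1) - P k = ((1 / N : ℝ) : 𝕜) • (R - 1) := by
      simp only [P, add_sub_add_left_eq_sub, ← sub_smul, ← RCLike.ofReal_sub]
      congr 3
      push_cast
      ring
    rw [hstep, norm_smul, RCLike.norm_of_nonneg (by positivity), one_div_mul_eq_div,
      div_lt_iff₀ hN₀]
    rwa [div_lt_iff₀ hm, mul_comm] at hN

end CasazzaChristensen

section BoundedBelow

variable {𝕜 E : Type*} [RCLike 𝕜] [NormedAddCommGroup E] [InnerProductSpace 𝕜 E] [CompleteSpace E]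

theorem mul_norm_le_norm_adjoint_apply {R : E →L[𝕜] E} (hR : IsUnit R) {m : ℝ} (hm : 0 < m)
    (hbelow : ∀ x, m * ‖x‖ ≤ ‖R x‖) (x : E) : m * ‖x‖ ≤ ‖adjoint R x‖ := by
  obtain ⟨u, rfl⟩ := hR
  have hinv : star (↑u⁻¹ : E →L[𝕜] E) * star (u : E →L[𝕜] E) = 1 := by
    rw [← star_mul, u.mul_inv, star_one]
  have hx : star (↑u⁻¹ : E →L[𝕜] E) (adjoint (u : E →L[𝕜] E) x) = x := DFunLike.congr_fun hinv x
  calc m * ‖x‖ ≤ m * (‖star (↑u⁻¹ : E →L[𝕜] E)‖ * ‖adjoint (u : E →L[𝕜] E) x‖) := by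
        gcongr
        conv_lhs => rw [← hx]
        exact le_opNorm _ _
    _ ≤ m * (m⁻¹ * ‖adjoint (u : E →L[𝕜] E) x‖) := by
        rw [star_eq_adjoint, adjoint.norm_map]
        gcongr
        exact norm_inv_le_of_mul_norm_le u hm hbelow
    _ = ‖adjoint (u : E →L[𝕜] E) x‖ := by field_simp

theorem isUnit_comp_adjoint_and_div_mul_norm_le {S T R : E →L[𝕜] E} (hST : S ∘L T = 1)
    (hTS : T ∘L S = 1) (hR : IsUnit R) {m : ℝ} (hm : 0 < m) (hbelow : ∀ x, m * ‖x‖ ≤ ‖R x‖) :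
    IsUnit (S ∘L adjoint R) ∧ ∀ x, m / ‖adjoint T‖ * ‖x‖ ≤ ‖(S ∘L adjoint R) x‖ := by
  have hS : IsUnit S := ⟨⟨S, T, hST, hTS⟩, rfl⟩
  refine ⟨hS.mul hR.star, fun x => ?_⟩
  have hTS' : T ((S ∘L adjoint R) x) = adjoint R x :=
    DFunLike.congr_fun (congrArg (· ∘L adjoint R) hTS) x
  rw [div_mul_eq_mul_div]
  refine div_le_of_le_mul₀ (norm_nonneg _) (norm_nonneg _) ?_
  calc m * ‖x‖ ≤ ‖T ((S ∘L adjoint R) x)‖ := hTS' ▸ mul_norm_le_norm_adjoint_apply hR hm hbelow x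
    _ ≤ ‖(S ∘L adjoint R) x‖ * ‖adjoint T‖ := by
      rw [adjoint.norm_map, mul_comm]
      exact le_opNorm _ _

end BoundedBelow

theorem norm_sub_comp_apply_le {𝕜 E G : Type*} [NontriviallyNormedField 𝕜]
    [NormedAddCommGroup E] [NormedSpace 𝕜 E] [NormedAddCommGroup G] [NormedSpace 𝕜 G]
    {P Q : G →L[𝕜] E} {V : E →L[𝕜] G} (hPV : P ∘L V = 1) {α β γ : ℝ} (hγ : 0 ≤ γ)
    (hPQ : ∀ y, ‖P y - Q y‖ ≤ α * ‖P y‖ + β * ‖Q y‖ + γ * ‖y‖) (x : E) :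
    ‖x - (Q ∘L V) x‖ ≤ (α + γ * ‖V‖) * ‖x‖ + β * ‖(Q ∘L V) x‖ := by
  have hPVx : P (V x) = x := DFunLike.congr_fun hPV x
  have h := hPQ (V x)
  rw [hPVx] at h
  rw [comp_apply]
  linarith [mul_le_mul_of_nonneg_left (le_opNorm V x) hγ]

section PaleyWiener

variable {E F : Type*} [NormedAddCommGroup E] [InnerProductSpace ℂ E] [CompleteSpace E]
  [NormedAddCommGroup F] [InnerProductSpace ℂ F] [CompleteSpace F]

def IsPaleyWienerPerturbation (A B : ℕ → E →L[ℂ] F) (α β γ : ℝ) : Prop :=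
  ∀ m (y : l2 ℕ F),
    ‖∑ n ∈ Finset.range m, adjoint (A n) (y n) - ∑ n ∈ Finset.range m, adjoint (B n) (y n)‖ ≤
      α * ‖∑ n ∈ Finset.range m, adjoint (A n) (y n)‖ +
      β * ‖∑ n ∈ Finset.range m, adjoint (B n) (y n)‖ +
      γ * √(∑ n ∈ Finset.range m, ‖y n‖ ^ 2)

namespace IsPaleyWienerPerturbation

variable {A B : ℕ → E →L[ℂ] F} {θA θB : E →L[ℂ] l2 ℕ F} {α β γ : ℝ}

theorem norm_sum_adjoint_apply_le (hP : IsPaleyWienerPerturbation A B α β γ)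
    (hθA : IsAnalysisOperator A θA) (hα : 0 ≤ α) (hβ : β < 1) (hγ : 0 ≤ γ) (m : ℕ)
    (y : l2 ℕ F) :
    ‖∑ n ∈ Finset.range m, adjoint (B n) (y n)‖ ≤ ((1 + α) * ‖θA‖ + γ) / (1 - β) * ‖y‖ := by
  have hA := hθA.norm_sum_adjoint_apply_le y (Finset.range m)
  rw [div_mul_eq_mul_div, le_div_iff₀ (sub_pos.2 hβ)]
  nlinarith [hP m y, mul_le_mul_of_nonneg_left (sqrt_sum_norm_sq_le y (Finset.range m)) hγ,
    norm_le_norm_add_norm_sub (∑ n ∈ Finset.range m, adjoint (A n) (y n))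
      (∑ n ∈ Finset.range m, adjoint (B n) (y n))]

theorem norm_adjoint_sub_le (hP : IsPaleyWienerPerturbation A B α β γ)
    (hθA : IsAnalysisOperator A θA) (hθB : IsAnalysisOperator B θB) (hγ : 0 ≤ γ) (y : l2 ℕ F) :
    ‖adjoint θA y - adjoint θB y‖ ≤ α * ‖adjoint θA y‖ + β * ‖adjoint θB y‖ + γ * ‖y‖ := by
  have hA := (hθA.hasSum_adjoint_apply y).tendsto_sum_nat
  have hB := (hθB.hasSum_adjoint_apply y).tendsto_sum_nat
  refine le_of_tendsto_of_tendsto' (hA.sub hB).norm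
    (((hA.norm.const_mul α).add (hB.norm.const_mul β)).add tendsto_const_nhds) fun m => ?_
  exact (hP m y).trans (by gcongr; exact sqrt_sum_norm_sq_le y _)

end IsPaleyWienerPerturbation

end PaleyWiener

/-- Paley–Wiener-type perturbation of a factorable weak OVF `((Aₙ),(Ψₙ))`
(frame operator `S`, inverse `T`): under the three-constant perturbation inequality,
`((Bₙ),(Ψₙ))` is a factorable weak OVF with the stated frame bounds. -/
theorem stmt18
    (A Ψ : ℕ → H →L[ℂ] H₀) (S T : H →L[ℂ] H)
    (hS : ∀ h : H, SeqSum (fun n => adjoint (Ψ n) (A n h)) (S h))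
    (hST : S ∘L T = 1) (hTS : T ∘L S = 1)
    (θA θΨ : H →L[ℂ] l2 ℕ H₀)
    (hθA : ∀ h : H, SeqSum (fun n => Lop n (A n h)) (θA h))
    (hθΨ : ∀ h : H, SeqSum (fun n => Lop n (Ψ n h)) (θΨ h))
    (B : ℕ → H →L[ℂ] H₀) (α β γ : ℝ)
    (hα : 0 ≤ α) (hβ : 0 ≤ β) (hγ : 0 ≤ γ)
    (hmax : max (α + γ * ‖θΨ ∘L adjoint T‖) β < 1)
    (hpert : ∀ (m : ℕ) (y : l2 ℕ H₀),
      ‖∑ n ∈ Finset.range m, (adjoint (A n) - adjoint (B n)) (adjoint (Lop n) y)‖ ≤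
        α * ‖∑ n ∈ Finset.range m, adjoint (A n) (adjoint (Lop n) y)‖ +
        β * ‖∑ n ∈ Finset.range m, adjoint (B n) (adjoint (Lop n) y)‖ +
        γ * Real.sqrt (∑ n ∈ Finset.range m, ‖adjoint (Lop n) y‖ ^ 2)) :
    ∃ (θB : H →L[ℂ] l2 ℕ H₀) (S' : H →L[ℂ] H),
      (∀ h : H, SeqSum (fun n => Lop n (B n h)) (θB h)) ∧
      (∀ h : H, SeqSum (fun n => adjoint (Ψ n) (B n h)) (S' h)) ∧
      IsUnit S' ∧
      (∀ h : H,
        (1 - (α + γ * ‖θΨ ∘L adjoint T‖)) / ((1 + β) * ‖adjoint T‖) * ‖h‖ ≤ ‖S' h‖ ∧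
        ‖S' h‖ ≤ ‖θΨ‖ * ((1 + α) * ‖θA‖ + γ) / (1 - β) * ‖h‖) := by
  obtain ⟨hk, hβ₁⟩ := max_lt_iff.mp hmax
  have hP : IsPaleyWienerPerturbation A B α β γ := fun m y => by
    simpa only [adjoint_Lop_apply_s18, sub_apply, Finset.sum_sub_distrib] using hpert m y
  obtain ⟨θB, hθB, hθB_le⟩ := exists_isAnalysisOperator
    (by have := sub_pos.2 hβ₁; positivity) (hP.norm_sum_adjoint_apply_le hθA hα hβ₁ hγ)
  have hSθ : S = adjoint θΨ ∘L θA :=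
    ext fun h => tendsto_nhds_unique (hS h) (IsAnalysisOperator.seqSum_adjoint_apply hθΨ hθA h)
  have hAV : adjoint θA ∘L (θΨ ∘L adjoint T) = 1 := by
    rw [← comp_assoc, ← adjoint_adjoint θΨ, ← adjoint_comp, ← hSθ, ← adjoint_comp, hTS]
    exact star_one _
  set R := adjoint θB ∘L (θΨ ∘L adjoint T)
  have hR := norm_sub_comp_apply_le hAV hγ (hP.norm_adjoint_sub_le hθA hθB hγ)
  have hRunit : IsUnit R := isUnit_of_norm_sub_apply_le hk hβ₁ hR
  have hRadj : adjoint R = T ∘L (adjoint θΨ ∘L θB) := by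
    simp only [R, adjoint_comp, adjoint_adjoint, comp_assoc]
  have hS' : adjoint θΨ ∘L θB = S ∘L adjoint R := by
    rw [hRadj, ← comp_assoc, hST]
    rfl
  obtain ⟨hS'unit, hS'below⟩ := isUnit_comp_adjoint_and_div_mul_norm_le hST hTS hRunit
    (by have := sub_pos.2 hk; positivity) fun x => div_mul_norm_le_norm_of_norm_sub_le hβ (hR x)
  refine ⟨θB, adjoint θΨ ∘L θB, hθB, IsAnalysisOperator.seqSum_adjoint_apply hθΨ hθB,
    hS' ▸ hS'unit, fun h => ⟨by simpa only [div_div, hS'] using hS'below h, ?_⟩⟩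
  calc ‖(adjoint θΨ ∘L θB) h‖ ≤ ‖adjoint θΨ‖ * ‖θB h‖ := le_opNorm (adjoint θΨ) (θB h)
    _ ≤ ‖θΨ‖ * (((1 + α) * ‖θA‖ + γ) / (1 - β) * ‖h‖) := by
      rw [adjoint.norm_map]
      gcongr
      exact hθB_le h
    _ = ‖θΨ‖ * ((1 + α) * ‖θA‖ + γ) / (1 - β) * ‖h‖ := by ring
end
end
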